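/- arXiv:1508.03168 — 3 statements merged into one kernel-verified Lean document; each statement's English description precedes it below -/
import Mathlib

section
/- Let (α_k)_{k≥0} be endomorphisms of a monoid (or more generally self-maps of a set) satisfying: (1) α_j ∘ α_i = α_i ∘ α_{j-1} for all i < j, and (2) α_k fixes every element of a distinguished subset F_{k-1} pointwise, where F_{-1} ⊆ F_0 ⊆ F_1 ⊆ ... is an increasing family with α_0(F_{n-1}) ⊆ F_n and F_n ⊆ Fix(α_{n+1}). Then for x ∈ F_0 and N, k ∈ ℕ: α_k(α_0^N(x)) = α_0^N(x) if N < k, and α_k(α_0^N(x)) = α_0^{N+1}(x) if N ≥ k. -/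
/-!
The relation `α (j + 1) ∘ α 0 = α 0 ∘ α j` says that `α 0` semiconjugates `α j` to `α (j + 1)`;
iterating, `(α 0)^[k]` semiconjugates `α 0` to `α k`, so `α k` shifts every `(α 0)^[N] y` with
`k ≤ N`. For `N < k`, the point `(α 0)^[N] x` lies in `F N ⊆ F (k - 1)`, which `α k` fixes.
-/

open Function Set

section PartialShift

variable {X : Type*} {α : ℕ → X → X}

theorem semiconj_zero_of_comp_eq (hrel : ∀ i j, i < j → α j ∘ α i = α i ∘ α (j - 1)) (j : ℕ) :
    Semiconj (α 0) (α j) (α (j + 1)) := fun y =>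
  (congrFun (hrel 0 (j + 1) j.succ_pos) y).symm

theorem apply_iterate_zero_of_le (hsemi : ∀ j, Semiconj (α 0) (α j) (α (j + 1))) (y : X)
    {N k : ℕ} (hkN : k ≤ N) : α k ((α 0)^[N] y) = (α 0)^[N + 1] y := by
  obtain ⟨m, rfl⟩ := Nat.exists_eq_add_of_le hkN
  have hk : Semiconj (α 0)^[k] (α 0) (α k) := by
    simpa only [add_zero] using Semiconj.iterate_left hsemi k 0
  rw [iterate_add_apply, ← hk.eq, ← iterate_succ_apply' (α 0) m, ← iterate_add_apply]
  rfl

theorem iterate_mem_of_mapsTo_succ {f : X → X} {F : ℕ → Set X}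
    (hshift : ∀ n, MapsTo f (F n) (F (n + 1))) {x : X} (hx : x ∈ F 0) (n : ℕ) :
    f^[n] x ∈ F n := by
  induction n with
  | zero => exact hx
  | succ n ih => simpa only [iterate_succ_apply'] using hshift n ih

theorem apply_iterate_zero_of_lt {F : ℕ → Set X} (hmono : ∀ n, F n ⊆ F (n + 1))
    (hshift : ∀ n, MapsTo (α 0) (F n) (F (n + 1))) (hfix : ∀ n x, x ∈ F n → α (n + 1) x = x)
    {x : X} (hx : x ∈ F 0) {N k : ℕ} (hNk : N < k) : α k ((α 0)^[N] x) = (α 0)^[N] x := by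
  obtain ⟨n, rfl⟩ := Nat.exists_eq_add_of_lt hNk
  exact hfix _ _ (monotone_nat_of_le_succ hmono (N.le_add_right n)
    (iterate_mem_of_mapsTo_succ hshift hx N))

end PartialShift

/-- Proposition 2.6 (partial shift property): given maps `α_k : X → X` satisfying the
cosimplicial-type relations and acting trivially on an increasing family of subsets
`F_n` with `α_0 (F_{n-1}) ⊆ F_n` and `F_n ⊆ Fix (α_{n+1})`, for `x ∈ F_0` the partial
shift `α_k` fixes `α_0^N x` if `N < k` and shifts it to `α_0^{N+1} x` if `N ≥ k`. -/
theorem partial_shift_property {X : Type*} (α : ℕ → X → X) (F : ℕ → Set X)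
    (hrel : ∀ i j, i < j → α j ∘ α i = α i ∘ α (j - 1))
    (hmono : ∀ n, F n ⊆ F (n + 1))
    (hshift : ∀ n x, x ∈ F n → α 0 x ∈ F (n + 1))
    (hfix : ∀ n x, x ∈ F n → α (n + 1) x = x)
    (x : X) (hx : x ∈ F 0) (N k : ℕ) :
    (N < k → α k ((α 0)^[N] x) = (α 0)^[N] x) ∧
    (k ≤ N → α k ((α 0)^[N] x) = (α 0)^[N + 1] x) :=
  ⟨apply_iterate_zero_of_lt hmono (fun n _ => hshift n _) hfix hx,
    apply_iterate_zero_of_le (semiconj_zero_of_comp_eq hrel) x⟩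
end

section
/- Let the braid monoid B⁺_∞ (generated by σ_1, σ_2, ... with relations σ_i σ_{i+1} σ_i = σ_{i+1} σ_i σ_{i+1} and σ_i σ_j = σ_j σ_i for |i-j| > 1) act on a set X. Define X^n := {x ∈ X : σ_k · x = x for all k ≥ n+2}, and define δ^k : X^{n-1} → X^n for 0 ≤ k ≤ n by δ^k(x) = σ_{k+1} σ_{k+2} ⋯ σ_{n+1} · x. Then δ^k is well-defined (maps X^{n-1} into X^n) and the cosimplicial identities δ^j ∘ δ^i = δ^i ∘ δ^{j-1} hold as maps X^{n-1} → X^{n+1} for all 0 ≤ i < j ≤ n+1. -/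
/-!
For `1 ≤ k ≤ t < m` the braid relations give `σ_{t+1} (σ_k ⋯ σ_m) = (σ_k ⋯ σ_m) σ_t`: for
`t = k` it is `σ_k σ_{k+1} σ_k = σ_{k+1} σ_k σ_{k+1}` once `σ_k` has moved past `σ_{k+2} ⋯ σ_m`,
and for `t > k` one commutes `σ_{t+1}` past `σ_k` and inducts. Letter by letter this yields
`(σ_{j+1} ⋯ σ_{n+2}) (σ_{i+1} ⋯ σ_{n+2}) = (σ_{i+1} ⋯ σ_{n+2}) (σ_j ⋯ σ_{n+1})`, which is the
cosimplicial identity on `X^{n-1}` because `σ_{n+2}` fixes those points.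
-/

/-- Action of the increasing word `σ_i σ_{i+1} ⋯ σ_j` on `x`, where `a k` is the action
of the generator `σ_k`:  `seqAct a i j x = a i (a (i+1) (⋯ (a j x)))`. -/
def seqAct {X : Type*} (a : ℕ → X → X) (i j : ℕ) (x : X) : X :=
  ((List.range (j + 1 - i)).map (fun t => a (i + t))).foldr (fun f y => f y) x

open Function

section
variable {X : Type*}

lemma semiconj_foldr_map {ι : Type*} {W : X → X} {f g : ι → X → X} (l : List ι)
    (h : ∀ s ∈ l, Semiconj W (f s) (g s)) :
    Semiconj W (fun x => (l.map f).foldr (fun F y => F y) x)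
      (fun x => (l.map g).foldr (fun F y => F y) x) := by
  induction l with
  | nil => exact fun _ => rfl
  | cons s l ih =>
    intro x
    simp only [List.map_cons, List.foldr_cons]
    rw [h s List.mem_cons_self, ih (fun s hs => h s (List.mem_cons_of_mem _ hs)) x]

lemma seqAct_semiconj {a b : ℕ → X → X} {W : X → X} {i j : ℕ}
    (h : ∀ t, i ≤ t → t ≤ j → Semiconj W (a t) (b t)) :
    Semiconj W (seqAct a i j) (seqAct b i j) :=
  semiconj_foldr_map _ fun s hs => h _ le_self_add (by simp at hs; omega)

lemma seqAct_commute {a : ℕ → X → X} {g : X → X} {i j : ℕ}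
    (h : ∀ t, i ≤ t → t ≤ j → Function.Commute g (a t)) : Function.Commute g (seqAct a i j) :=
  seqAct_semiconj h

lemma seqAct_add_one (a : ℕ → X → X) (i j : ℕ) :
    seqAct a (i + 1) (j + 1) = seqAct (fun t => a (t + 1)) i j := by
  funext x
  simp only [seqAct, Nat.add_sub_add_right, Nat.add_right_comm i 1]

lemma seqAct_of_lt (a : ℕ → X → X) {i j : ℕ} (h : j < i) (x : X) : seqAct a i j x = x := by
  simp [seqAct, Nat.sub_eq_zero_of_le h]

lemma seqAct_of_le (a : ℕ → X → X) {i j : ℕ} (h : i ≤ j) (x : X) :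
    seqAct a i j x = a i (seqAct a (i + 1) j x) := by
  rw [seqAct, show j + 1 - i = j + 1 - (i + 1) + 1 by omega, List.range_succ_eq_map]
  simp only [List.map_cons, List.foldr_cons, List.map_map, Nat.add_zero, seqAct]
  congr 3
  funext t
  simp only [comp_apply, Nat.succ_eq_add_one, Nat.add_assoc, Nat.add_comm 1]

lemma seqAct_succ_right (a : ℕ → X → X) {i j : ℕ} (h : i ≤ j + 1) (x : X) :
    seqAct a i (j + 1) x = seqAct a i j (a (j + 1) x) := by
  rw [seqAct, show j + 1 + 1 - i = j + 1 - i + 1 by omega, List.range_succ]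
  simp only [List.map_append, List.foldr_append, List.map_cons, List.map_nil,
    List.foldr_cons, List.foldr_nil, Nat.add_sub_cancel' h, seqAct]

lemma seqAct_succ_right_of_apply_eq (a : ℕ → X → X) (i : ℕ) {j : ℕ} {x : X}
    (hx : a (j + 1) x = x) : seqAct a i (j + 1) x = seqAct a i j x := by
  rcases le_or_gt i (j + 1) with h | h
  · rw [seqAct_succ_right a h, hx]
  · rw [seqAct_of_lt a h, seqAct_of_lt a (by omega)]

variable {a : ℕ → X → X}

lemma apply_seqAct_of_apply_eq (hB2 : ∀ i j, 1 ≤ i → i + 1 < j → Function.Commute (a i) (a j))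
    {i j m : ℕ} (hi : 1 ≤ i) (hm : j + 2 ≤ m) {x : X} (hx : a m x = x) :
    a m (seqAct a i j x) = seqAct a i j x := by
  rw [seqAct_commute (fun t hit htj => (hB2 t m (by omega) (by omega)).symm) x, hx]

lemma seqAct_semiconj_succ
    (hB1 : ∀ i, 1 ≤ i → ∀ x, a i (a (i + 1) (a i x)) = a (i + 1) (a i (a (i + 1) x)))
    (hB2 : ∀ i j, 1 ≤ i → i + 1 < j → Function.Commute (a i) (a j))
    {k t m : ℕ} (hk : 1 ≤ k) (hkt : k ≤ t) (htm : t < m) :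
    Semiconj (seqAct a k m) (a t) (a (t + 1)) := by
  obtain ⟨d, rfl⟩ := Nat.exists_eq_add_of_le hkt
  induction d generalizing k with
  | zero =>
    intro x
    have hfar : Function.Commute (a k) (seqAct a (k + 1 + 1) m) :=
      seqAct_commute fun s hs _ => hB2 k s hk (by omega)
    rw [Nat.add_zero, seqAct_of_le a (by omega) (a k x), seqAct_of_le a (by omega) (a k x),
      ← hfar x, hB1 k hk, ← seqAct_of_le a (by omega) x, ← seqAct_of_le a (by omega) x]
  | succ d ih =>
    intro x
    rw [seqAct_of_le a (by omega) (a _ x), seqAct_of_le a (by omega) x,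
      show k + (d + 1) = k + 1 + d by omega, ih (by omega) (by omega) (by omega) x,
      hB2 k _ hk (by omega)]

lemma seqAct_semiconj_seqAct
    (hB1 : ∀ i, 1 ≤ i → ∀ x, a i (a (i + 1) (a i x)) = a (i + 1) (a i (a (i + 1) x)))
    (hB2 : ∀ i j, 1 ≤ i → i + 1 < j → Function.Commute (a i) (a j))
    {k j m : ℕ} (hk : 1 ≤ k) (hkj : k ≤ j) :
    Semiconj (seqAct a k (m + 1)) (seqAct a j m) (seqAct a (j + 1) (m + 1)) := by
  rw [seqAct_add_one]
  exact seqAct_semiconj fun t hjt htm => seqAct_semiconj_succ hB1 hB2 hk (by omega) (by omega)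

end

/-- Theorem 3.1: given an action of the braid monoid `B⁺_∞` on a set `X` (described by the
actions `a k` of the generators `σ_k`, `k ≥ 1`, satisfying the braid relations), with
`X^n := {x : σ_k · x = x for all k ≥ n+2}`, the maps
`δ^k x := σ_{k+1} ⋯ σ_{n+1} · x` are well defined `X^{n-1} → X^n` for `0 ≤ k ≤ n` and
satisfy the cosimplicial identities `δ^j ∘ δ^i = δ^i ∘ δ^{j-1}` as maps `X^{n-1} → X^{n+1}`
for `0 ≤ i < j ≤ n+1`. -/
theorem braid_action_SCO {X : Type*} (a : ℕ → X → X)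
    (hB1 : ∀ i, 1 ≤ i → ∀ x, a i (a (i + 1) (a i x)) = a (i + 1) (a i (a (i + 1) x)))
    (hB2 : ∀ i j, 1 ≤ i → i + 1 < j → ∀ x, a i (a j x) = a j (a i x))
    (n : ℕ) :
    (∀ k, k ≤ n → ∀ x, (∀ m, n + 1 ≤ m → a m x = x) →
        ∀ m, n + 2 ≤ m → a m (seqAct a (k + 1) (n + 1) x) = seqAct a (k + 1) (n + 1) x) ∧
    (∀ i j, i < j → j ≤ n + 1 → ∀ x, (∀ m, n + 1 ≤ m → a m x = x) →
        seqAct a (j + 1) (n + 2) (seqAct a (i + 1) (n + 1) x)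
          = seqAct a (i + 1) (n + 2) (seqAct a j (n + 1) x)) := by
  constructor
  · intro k _ x hx m hm
    rw [seqAct_succ_right_of_apply_eq a _ (hx (n + 1) le_rfl)]
    exact apply_seqAct_of_apply_eq hB2 (by omega) hm (hx m (by omega))
  · intro i j hij _ x hx
    rw [← seqAct_succ_right_of_apply_eq a (i + 1) (hx (n + 2) (by omega))]
    exact (seqAct_semiconj_seqAct hB1 hB2 (by omega) hij x).symm
end

section
/- Let e_1, e_2, ... be idempotents in a unital complex algebra A satisfying e_n e_{n±1} e_n = β^{-1} e_n and e_n e_m = e_m e_n for |n-m| ≥ 2, where β = 2 + q + q^{-1} for some nonzero q ∈ ℂ. Define g_n := q e_n - (1 - e_n). Then the elements g_n satisfy the braid relations: g_n g_{n+1} g_n = g_{n+1} g_n g_{n+1} and g_n g_m = g_m g_n for |n-m| ≥ 2. -/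
/-!
Writing `c = q + 1`, the elements are `g_n = c • e_n - 1`. For idempotents `a`, `b` with
`a * b * a = t • a` and `b * a * b = t • b`, expanding the two triple products gives
`g_a g_b g_a - g_b g_a g_b = c (c² t - c + 1) • (a - b)`, and the Temperley–Lieb value
`t = β⁻¹ = q / (q + 1)²` is exactly the root of `c² t - c + 1`.
-/

section Algebra

variable {K A : Type*} [CommRing K] [Ring A] [Algebra K A]

lemma smul_sub_one_sub_eq (q : K) (x : A) : q • x - (1 - x) = (q + 1) • x - 1 := by
  rw [add_smul, one_smul]; abel

lemma smul_sub_one_braid_sub_eq {a b : A} (ha : a * a = a) (hb : b * b = b)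
    (c t : K) (hab : a * b * a = t • a) (hba : b * a * b = t • b) :
    (c • a - 1) * (c • b - 1) * (c • a - 1) - (c • b - 1) * (c • a - 1) * (c • b - 1)
      = (c * (c ^ 2 * t - c + 1)) • (a - b) := by
  simp only [sub_mul, mul_sub, smul_mul_assoc, mul_smul_comm, one_mul, mul_one, smul_smul,
    ha, hb, hab, hba]
  module

lemma smul_sub_one_braid {a b : A} (ha : a * a = a) (hb : b * b = b) {c t : K}
    (hct : c ^ 2 * t = c - 1) (hab : a * b * a = t • a) (hba : b * a * b = t • b) :
    (c • a - 1) * (c • b - 1) * (c • a - 1) = (c • b - 1) * (c • a - 1) * (c • b - 1) := by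
  rw [← sub_eq_zero, smul_sub_one_braid_sub_eq ha hb c t hab hba, hct,
    sub_sub_cancel_left, neg_add_cancel, mul_zero, zero_smul]

lemma Commute.smul_sub_one {a b : A} (h : Commute a b) (c d : K) :
    Commute (c • a - 1) (d • b - 1) :=
  ((h.smul_left c).smul_right d |>.sub_right (Commute.one_right _)).sub_left (Commute.one_left _)

end Algebra

lemma sq_add_one_mul_inv_two_add_add_inv {K : Type*} [Field K] {q : K} (hq0 : q ≠ 0)
    (hq1 : q ≠ -1) : (q + 1) ^ 2 * (2 + q + q⁻¹)⁻¹ = q := by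
  have hq1' : q + 1 ≠ 0 := fun h => hq1 (eq_neg_of_add_eq_zero_left h)
  rw [show (2 : K) + q + q⁻¹ = (q + 1) ^ 2 / q by field_simp; ring, inv_div]
  field_simp

/-- If `(e_n)_{n ≥ 1}` are Temperley–Lieb idempotents in a unital complex algebra `A`,
with parameter `β = 2 + q + q⁻¹` (`q ≠ 0`, `q ≠ -1`), then the elements
`g_n := q • e_n - (1 - e_n)` satisfy the braid relations. -/
theorem TL_gives_braid {A : Type*} [Ring A] [Algebra ℂ A] (q : ℂ) (hq0 : q ≠ 0)
    (hq1 : q ≠ -1) (e : ℕ → A)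
    (hidem : ∀ n, 1 ≤ n → e n * e n = e n)
    (hTL1 : ∀ n, 1 ≤ n → e n * e (n + 1) * e n = (2 + q + q⁻¹)⁻¹ • e n)
    (hTL1' : ∀ n, 1 ≤ n → e (n + 1) * e n * e (n + 1) = (2 + q + q⁻¹)⁻¹ • e (n + 1))
    (hTL2 : ∀ n m, 1 ≤ n → n + 2 ≤ m → e n * e m = e m * e n) :
    (∀ n, 1 ≤ n →
        (q • e n - (1 - e n)) * (q • e (n + 1) - (1 - e (n + 1))) * (q • e n - (1 - e n))
          = (q • e (n + 1) - (1 - e (n + 1))) * (q • e n - (1 - e n)) *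
              (q • e (n + 1) - (1 - e (n + 1)))) ∧
    (∀ n m, 1 ≤ n → n + 2 ≤ m →
        (q • e n - (1 - e n)) * (q • e m - (1 - e m))
          = (q • e m - (1 - e m)) * (q • e n - (1 - e n))) := by
  simp only [smul_sub_one_sub_eq]
  refine ⟨fun n hn => ?_, fun n m hn hm => ?_⟩
  · exact smul_sub_one_braid (hidem n hn) (hidem (n + 1) (by omega))
      (by rw [sq_add_one_mul_inv_two_add_add_inv hq0 hq1]; ring) (hTL1 n hn) (hTL1' n hn)
  · exact (Commute.smul_sub_one (hTL2 n m hn hm) _ _).eq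
end
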